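/- Let Θ̂ be a symmetric positive definite matrix that minimizes Φ(·, λ) over the set of symmetric positive definite p×p matrices. Then for every γ > 0 and all indices i, j, the fixed-point equation Θ̂_{ij} = ST(Θ̂_{ij} − γ(S_{ij} − (Θ̂⁻¹)_{ij}), λγ) holds. -/

import Mathlib

/-!
Perturb `Θhat` along the symmetric direction `H` supported on `(i, j)` and `(j, i)`. Positive
definiteness is an open condition, so `t = 0` is a local minimum of `t ↦ Φ(Θhat + t H, λ)`, which is
a differentiable function plus `λ c |Θhat i j + t|` (`c ∈ {1, 2}` the number of touched entries).
Since `d/dt log det (Θhat + t H) = tr (Θhat⁻¹ H)`, the smooth part has derivative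
`c (S i j - Θhat⁻¹ i j)` at `0`, and one-sided derivative tests give the subgradient condition
`|S i j - Θhat⁻¹ i j| ≤ λ` with `(S i j - Θhat⁻¹ i j) Θhat i j = -λ |Θhat i j|`.
That is exactly the condition for `Θhat i j` to be fixed by the proximal step of `λ |·|`.
-/

open Matrix

/-- The GLASSO objective `Φ(Θ, λ) = −log det Θ + ⟨S, Θ⟩ + λ ‖Θ‖₁`. -/
noncomputable def glassoObj {p : ℕ} (S Θ : Matrix (Fin p) (Fin p) ℝ) (lam : ℝ) : ℝ :=
  -Real.log Θ.det + (∑ i, ∑ j, S i j * Θ i j) + lam * ∑ i, ∑ j, |Θ i j|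

/-- The soft-thresholding operator `ST(z, τ) = sign(z) · max(|z| − τ, 0)`. -/
noncomputable def softThresh (z τ : ℝ) : ℝ :=
  Real.sign z * max (|z| - τ) 0

open Filter Topology

lemma softThresh_sub_mul_eq_self {u e τ γ : ℝ} (hγ : 0 < γ) (he : |e| ≤ τ)
    (heu : e * u = -(τ * |u|)) : softThresh (u - γ * e) (τ * γ) = u := by
  have hτ : 0 ≤ τ := (abs_nonneg e).trans he
  unfold softThresh
  rcases lt_trichotomy u 0 with hu | rfl | hu
  · obtain rfl : e = τ := by
      rw [abs_of_neg hu] at heu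
      exact mul_right_cancel₀ hu.ne (by linarith)
    have hz : u - γ * e < 0 := by nlinarith
    rw [Real.sign_of_neg hz, abs_of_neg hz, max_eq_left (by linarith)]
    ring
  · have : |0 - γ * e| - τ * γ ≤ 0 := by
      rw [zero_sub, abs_neg, abs_mul, abs_of_pos hγ]
      nlinarith
    rw [max_eq_right this, mul_zero]
  · obtain rfl : e = -τ := by
      rw [abs_of_pos hu] at heu
      exact mul_right_cancel₀ hu.ne' (by linarith)
    have hz : 0 < u - γ * -τ := by nlinarith
    rw [Real.sign_of_pos hz, abs_of_pos hz, max_eq_left (by linarith)]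
    ring

lemma HasDerivAt.nonneg_of_eventually_le {f : ℝ → ℝ} {d x : ℝ} (hf : HasDerivAt f d x)
    (h : ∀ᶠ t in 𝓝[>] x, f x ≤ f t) : 0 ≤ d := by
  refine ge_of_tendsto ((hasDerivAt_iff_tendsto_slope.1 hf).mono_left (nhdsGT_le_nhdsNE x)) ?_
  filter_upwards [h, self_mem_nhdsWithin] with t ht (htx : x < t)
  rw [slope_def_field]
  exact div_nonneg (sub_nonneg.2 ht) (sub_nonneg.2 htx.le)

section AbsPenalty

variable {f : ℝ → ℝ} {d κ u : ℝ}

lemma nonneg_of_isLocalMin_add_abs (hf : HasDerivAt f d 0) (hκ : 0 ≤ κ)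
    (hmin : IsLocalMin (fun t ↦ f t + κ * |u + t|) 0) {v ρ : ℝ}
    (hρ : ∀ᶠ s in 𝓝[>] 0, |u + s * v| ≤ |u| + s * ρ) : 0 ≤ d * v + κ * ρ := by
  have hf' : HasDerivAt f d (0 * v) := by rwa [zero_mul]
  have hF : HasDerivAt (fun s ↦ f (s * v) + κ * ρ * s) (d * v + κ * ρ) 0 := by
    have hfv : HasDerivAt (fun s ↦ f (s * v)) (d * v) 0 := hf'.comp 0 (hasDerivAt_mul_const v)
    exact hfv.add (by simpa using (hasDerivAt_id (0 : ℝ)).const_mul (κ * ρ))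
  refine hF.nonneg_of_eventually_le ?_
  have hv : Tendsto (fun s : ℝ ↦ s * v) (𝓝[>] 0) (𝓝 0) :=
    ((continuous_mul_const v).tendsto' 0 0 (zero_mul v)).mono_left nhdsWithin_le_nhds
  filter_upwards [hv.eventually hmin, hρ] with s hs hsρ
  simp only [add_zero, zero_mul, mul_zero] at hs ⊢
  nlinarith [mul_le_mul_of_nonneg_left hsρ hκ]

lemma abs_le_and_mul_eq_of_isLocalMin_add_abs (hf : HasDerivAt f d 0) (hκ : 0 ≤ κ)
    (hmin : IsLocalMin (fun t ↦ f t + κ * |u + t|) 0) : |d| ≤ κ ∧ d * u = -(κ * |u|) := by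
  -- the directions `±1` bound `|d|`; moving `u` towards `0` forces `d * u ≤ -κ * |u|`
  have hright := nonneg_of_isLocalMin_add_abs hf hκ hmin (v := 1) (ρ := 1) <| by
    filter_upwards [self_mem_nhdsWithin] with s (hs : 0 < s)
    simpa [abs_of_pos hs] using abs_add_le u s
  have hleft := nonneg_of_isLocalMin_add_abs hf hκ hmin (v := -1) (ρ := 1) <| by
    filter_upwards [self_mem_nhdsWithin] with s (hs : 0 < s)
    simpa [abs_of_pos hs, ← sub_eq_add_neg] using abs_sub u s
  have hshrink := nonneg_of_isLocalMin_add_abs hf hκ hmin (v := -u) (ρ := -|u|) <| by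
    filter_upwards [Ioo_mem_nhdsGT one_pos] with s ⟨hs0, hs1⟩
    rw [show u + s * -u = (1 - s) * u by ring, abs_mul, abs_of_pos (sub_pos.2 hs1)]
    linarith
  have hdu : -(d * u) ≤ κ * |u| := by
    calc -(d * u) ≤ |d| * |u| := by rw [← abs_mul]; exact neg_le_abs _
      _ ≤ κ * |u| := mul_le_mul_of_nonneg_right (by rw [abs_le]; constructor <;> linarith)
          (abs_nonneg u)
  exact ⟨abs_le.2 ⟨by linarith, by linarith⟩, by linarith⟩

end AbsPenalty

section Determinant

variable {n : Type*} [Fintype n] [DecidableEq n]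

open Polynomial in
lemma Matrix.hasDerivAt_det_one_add_smul (M : Matrix n n ℝ) :
    HasDerivAt (fun t : ℝ ↦ (1 + t • M).det) M.trace 0 := by
  have hP : ∀ t : ℝ, (1 + t • M).det = (det (1 + (X : ℝ[X]) • M.map C)).eval t := fun t ↦ by
    rw [← coe_evalRingHom, RingHom.map_det]
    congr 1
    ext a b
    simp [Matrix.one_apply, apply_ite]
    ring
  rw [funext hP, ← derivative_det_one_add_X_smul]
  exact (det (1 + (X : ℝ[X]) • M.map C)).hasDerivAt 0

lemma Matrix.hasDerivAt_log_det_add_smul {A : Matrix n n ℝ} (hA : A.det ≠ 0)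
    (B : Matrix n n ℝ) :
    HasDerivAt (fun t : ℝ ↦ Real.log (A + t • B).det) (A⁻¹ * B).trace 0 := by
  have hfac : ∀ t : ℝ, (A + t • B).det = A.det * (1 + t • (A⁻¹ * B)).det := fun t ↦ by
    rw [← det_mul, Matrix.mul_add, Matrix.mul_one, Matrix.mul_smul, ← Matrix.mul_assoc,
      mul_nonsing_inv _ hA.isUnit, Matrix.one_mul]
  have hdet := ((hasDerivAt_det_one_add_smul (A⁻¹ * B)).const_mul A.det).log (by simpa using hA)
  simpa [hfac, hA] using hdet

end Determinant

open scoped MatrixOrder in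
lemma Matrix.PosDef.eventually_posDef_add_smul {n : Type*} [Fintype n] [DecidableEq n] [Nonempty n]
    {A B : Matrix n n ℝ} (hA : A.PosDef) (hB : B.IsHermitian) :
    ∀ᶠ t in 𝓝 (0 : ℝ), (A + t • B).PosDef := by
  obtain ⟨r, hr, hrA⟩ := (CFC.exists_pos_algebraMap_le_iff hA.isHermitian).2
    fun x hx ↦ hA.isStrictlyPositive.spectrum_pos hx
  obtain ⟨K, hK⟩ := (ContinuousFunctionalCalculus.isCompact_spectrum (R := ℝ) B)
    |>.exists_bound_of_continuousOn continuousOn_id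
  have hBK : B ≤ algebraMap ℝ _ K :=
    (le_algebraMap_iff_spectrum_le hB).2 fun x hx ↦ (le_abs_self x).trans (hK x hx)
  have hKB : algebraMap ℝ _ (-K) ≤ B :=
    (algebraMap_le_iff_le_spectrum hB).2 fun x hx ↦ neg_le_of_abs_le (hK x hx)
  have hsmall : ∀ᶠ t in 𝓝 (0 : ℝ), |t| * K < r :=
    ((continuous_abs.mul continuous_const).tendsto' 0 0 (by simp)).eventually_lt_const hr
  filter_upwards [hsmall] with t ht
  have htB : algebraMap ℝ _ (-(|t| * K)) ≤ t • B := by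
    rcases le_total 0 t with h | h
    · calc algebraMap ℝ _ (-(|t| * K)) = t • algebraMap ℝ (Matrix n n ℝ) (-K) := by
            simp [abs_of_nonneg h, Algebra.algebraMap_eq_smul_one, smul_smul]
        _ ≤ t • B := smul_le_smul_of_nonneg_left hKB h
    · calc algebraMap ℝ _ (-(|t| * K)) = t • algebraMap ℝ (Matrix n n ℝ) K := by
            simp [abs_of_nonpos h, Algebra.algebraMap_eq_smul_one, smul_smul]
        _ ≤ t • B := smul_le_smul_of_nonpos_left hBK h
  have hle : algebraMap ℝ _ (r - |t| * K) ≤ A + t • B := by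
    simpa [sub_eq_add_neg] using add_le_add hrA htB
  have hpos : (algebraMap ℝ (Matrix n n ℝ) (r - |t| * K)).PosDef := by
    rw [Algebra.algebraMap_eq_smul_one]
    exact PosDef.one.smul (sub_pos.2 ht)
  simpa using hpos.add_posSemidef (le_iff.1 hle)

section SymmPair

variable {n : Type*} [DecidableEq n] (i j : n)

def symmPair : Finset (n × n) := {(i, j), (j, i)}

/-- `E i j + E j i` for `i ≠ j`, but `E i i` (not `2 • E i i`) for `i = j`, so that
`Θ + t • pairIndicator i j` adds `t` to each entry it touches. -/
def pairIndicator : Matrix n n ℝ := of fun a b ↦ if (a, b) ∈ symmPair i j then 1 else 0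

variable {i j}

lemma swap_mem_symmPair {a b : n} : (b, a) ∈ symmPair i j ↔ (a, b) ∈ symmPair i j := by
  simp only [symmPair, Finset.mem_insert, Finset.mem_singleton, Prod.mk.injEq]
  tauto

lemma card_symmPair_pos : 0 < (symmPair i j).card :=
  Finset.card_pos.2 ⟨_, Finset.mem_insert_self _ _⟩

lemma sum_symmPair {f : n → n → ℝ} (hf : ∀ a b, f b a = f a b) :
    ∑ x ∈ symmPair i j, f x.1 x.2 = (symmPair i j).card * f i j := by
  rw [Finset.sum_congr rfl (g := fun _ ↦ f i j), Finset.sum_const, nsmul_eq_mul]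
  intro x hx
  simp only [symmPair, Finset.mem_insert, Finset.mem_singleton] at hx
  rcases hx with rfl | rfl
  exacts [rfl, hf _ _]

lemma sum_sum_ite_mem_symmPair [Fintype n] {f g : n → n → ℝ} (hf : ∀ a b, f b a = f a b)
    (hg : ∀ a b, g b a = g a b) :
    ∑ a, ∑ b, (if (a, b) ∈ symmPair i j then g a b else f a b) =
      ∑ a, ∑ b, f a b + (symmPair i j).card * (g i j - f i j) := by
  have hsplit : ∀ a b, (if (a, b) ∈ symmPair i j then g a b else f a b) =
      f a b + if (a, b) ∈ symmPair i j then g a b - f a b else 0 := by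
    intro a b
    split_ifs <;> ring
  simp only [hsplit, Finset.sum_add_distrib]
  rw [← sum_symmPair (f := fun a b ↦ g a b - f a b) (by intro a b; rw [hf, hg]),
    ← Fintype.sum_prod_type' (fun a b ↦ if (a, b) ∈ symmPair i j then g a b - f a b else 0),
    Finset.sum_ite_mem, Finset.univ_inter]

lemma pairIndicator_isSymm : (pairIndicator i j).IsSymm := by
  ext a b
  simp [pairIndicator, swap_mem_symmPair]

lemma add_smul_pairIndicator_apply (A : Matrix n n ℝ) (t : ℝ) (a b : n) :
    (A + t • pairIndicator i j) a b = if (a, b) ∈ symmPair i j then A a b + t else A a b := by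
  simp only [pairIndicator, Matrix.add_apply, Matrix.smul_apply, of_apply, smul_eq_mul]
  split_ifs <;> ring

lemma trace_mul_pairIndicator [Fintype n] {A : Matrix n n ℝ} (hA : A.IsSymm) :
    (A * pairIndicator i j).trace = (symmPair i j).card * A i j := by
  have h := sum_sum_ite_mem_symmPair (i := i) (j := j) (f := fun _ _ ↦ 0) (g := A)
    (fun _ _ ↦ rfl) hA.apply
  simp only [Finset.sum_const_zero, zero_add, sub_zero] at h
  rw [← h, trace]
  refine Finset.sum_congr rfl fun a _ ↦ Finset.sum_congr rfl fun b _ ↦ ?_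
  simp [pairIndicator, swap_mem_symmPair]

end SymmPair

lemma glassoObj_add_smul_pairIndicator_sub {p : ℕ} {S Θ : Matrix (Fin p) (Fin p) ℝ}
    (hS : S.IsSymm) (hΘ : Θ.IsSymm) (lam t : ℝ) (i j : Fin p) :
    glassoObj S (Θ + t • pairIndicator i j) lam - glassoObj S Θ lam =
      -Real.log (Θ + t • pairIndicator i j).det + Real.log Θ.det
        + t * ((symmPair i j).card * S i j)
        + lam * (symmPair i j).card * (|Θ i j + t| - |Θ i j|) := by
  have hlin := sum_sum_ite_mem_symmPair (i := i) (j := j) (f := fun a b ↦ S a b * Θ a b)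
    (g := fun a b ↦ S a b * (Θ a b + t)) (by simp [hS.apply, hΘ.apply])
    (by simp [hS.apply, hΘ.apply])
  have hnorm := sum_sum_ite_mem_symmPair (i := i) (j := j) (f := fun a b ↦ |Θ a b|)
    (g := fun a b ↦ |Θ a b + t|) (by simp [hΘ.apply]) (by simp [hΘ.apply])
  simp only [glassoObj, add_smul_pairIndicator_apply, mul_ite, apply_ite abs]
  rw [hlin, hnorm]
  ring

theorem stmt_4_general {p : ℕ} (S : Matrix (Fin p) (Fin p) ℝ) (hS : S.IsSymm)
    (lam : ℝ) (hlam : 0 < lam)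
    (Θhat : Matrix (Fin p) (Fin p) ℝ) (hΘ : Θhat.PosDef)
    (hmin : ∀ Θ : Matrix (Fin p) (Fin p) ℝ, Θ.PosDef →
      glassoObj S Θhat lam ≤ glassoObj S Θ lam) :
    ∀ γ : ℝ, 0 < γ → ∀ i j,
      Θhat i j = softThresh (Θhat i j - γ * (S i j - Θhat⁻¹ i j)) (lam * γ) := by
  intro γ hγ i j
  have : Nonempty (Fin p) := ⟨i⟩
  set c : ℝ := ((symmPair i j).card : ℝ)
  have hc : 0 < c := Nat.cast_pos.2 card_symmPair_pos
  set f : ℝ → ℝ := fun t ↦ -Real.log (Θhat + t • pairIndicator i j).det + t * (c * S i j)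
  have hf : HasDerivAt f (c * (S i j - Θhat⁻¹ i j)) 0 := by
    have hlog := hasDerivAt_log_det_add_smul hΘ.det_pos.ne' (pairIndicator i j)
    rw [trace_mul_pairIndicator (isHermitian_iff_isSymm.1 hΘ.inv.isHermitian)] at hlog
    have h : HasDerivAt f (-(c * Θhat⁻¹ i j) + c * S i j) 0 :=
      hlog.neg.add (hasDerivAt_mul_const _)
    rwa [mul_sub, sub_eq_neg_add]
  have hlocal : IsLocalMin (fun t ↦ f t + lam * c * |Θhat i j + t|) 0 := by
    filter_upwards [hΘ.eventually_posDef_add_smul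
      (isHermitian_iff_isSymm.2 pairIndicator_isSymm)] with t ht
    have hline := glassoObj_add_smul_pairIndicator_sub hS
      (isHermitian_iff_isSymm.1 hΘ.isHermitian) lam t i j
    have := hmin _ ht
    simp only [f, zero_smul, add_zero, zero_mul]
    linarith
  obtain ⟨habs, hmul⟩ := abs_le_and_mul_eq_of_isLocalMin_add_abs hf (by positivity) hlocal
  refine (softThresh_sub_mul_eq_self hγ ?_ ?_).symm
  · rw [abs_mul, abs_of_pos hc, mul_comm lam] at habs
    exact le_of_mul_le_mul_left habs hc
  · exact mul_left_cancel₀ hc.ne' (by linarith)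

theorem stmt_4 {p : ℕ} (hp : 1 ≤ p) (S : Matrix (Fin p) (Fin p) ℝ) (hS : S.IsSymm)
    (lam : ℝ) (hlam : 0 < lam)
    (Θhat : Matrix (Fin p) (Fin p) ℝ) (hΘ : Θhat.PosDef)
    (hmin : ∀ Θ : Matrix (Fin p) (Fin p) ℝ, Θ.PosDef →
      glassoObj S Θhat lam ≤ glassoObj S Θ lam) :
    ∀ γ : ℝ, 0 < γ → ∀ i j,
      Θhat i j = softThresh (Θhat i j - γ * (S i j - Θhat⁻¹ i j)) (lam * γ) :=
  stmt_4_general S hS lam hlam Θhat hΘ hmin
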